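/- Let p > 0, ν > 0, κ > 0, and for each α > 0 let x_α be the unique positive zero of f_α(x) = ν² x − 4·(p + κx/(x/α² + 1)). Then as α → ∞: (i) if ν²/(4κ) > 1, then x_α → 4p/(ν² − 4κ); (ii) if ν²/(4κ) = 1, then x_α/α → √(p/κ); (iii) if ν²/(4κ) < 1, then x_α/α² → 4κ/ν² − 1. -/

import Mathlib

/-!
Clearing the denominator, `x_α` is the positive root of
`ν² x² + ((ν² - 4κ) α² - 4p) x = 4p α²`. In the three regimes the rescaled unknowns `x_α`,
`x_α / α`, `x_α / α²` are positive roots of quadratics `a u² + b u = c` whose coefficients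
converge as `α → ∞`, and the positive root depends continuously on `(a, b, c)`: through
`(√(b² + 4ac) - b) / (2a)` when the limiting `a` is positive, and through the rationalized form
`2c / (b + √(b² + 4ac))` when `a → 0` (case (i)) or `b → 0` (case (ii)).
-/

open Filter

/-- The function `f_α` whose sign governs the discriminant of the characteristic polynomial
of the linearized order-parameter system. -/
noncomputable def ffun (p ν κ α x : ℝ) : ℝ :=
  ν ^ 2 * x - 4 * (p + κ * x / (x / α ^ 2 + 1))

open Topology

section QuadraticRoot

variable {a b c x : ℝ}

theorem sqrt_discrim_eq_of_quadratic (ha : 0 ≤ a) (hc : 0 ≤ c) (hx : 0 < x)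
    (h : a * x ^ 2 + b * x = c) : √(b ^ 2 + 4 * a * c) = 2 * a * x + b := by
  have hlin : 0 ≤ a * x + b := by
    refine nonneg_of_mul_nonneg_right ?_ hx
    rwa [show x * (a * x + b) = c by linear_combination h]
  rw [← h, show b ^ 2 + 4 * a * (a * x ^ 2 + b * x) = (2 * a * x + b) ^ 2 by ring]
  exact Real.sqrt_sq (by nlinarith)

theorem eq_sqrt_discrim_sub_div (ha : 0 < a) (hc : 0 ≤ c) (hx : 0 < x)
    (h : a * x ^ 2 + b * x = c) : x = (√(b ^ 2 + 4 * a * c) - b) / (2 * a) := by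
  rw [sqrt_discrim_eq_of_quadratic ha.le hc hx h]
  field_simp
  ring

theorem eq_div_add_sqrt_discrim (ha : 0 ≤ a) (hc : 0 < c) (hx : 0 < x)
    (h : a * x ^ 2 + b * x = c) : x = 2 * c / (b + √(b ^ 2 + 4 * a * c)) := by
  have hprod : x * (b + √(b ^ 2 + 4 * a * c)) = 2 * c := by
    rw [sqrt_discrim_eq_of_quadratic ha hc.le hx h]
    linear_combination 2 * h
  have hne : b + √(b ^ 2 + 4 * a * c) ≠ 0 := by
    rintro h0
    rw [h0, mul_zero] at hprod
    linarith
  exact eq_div_of_mul_eq hne hprod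

end QuadraticRoot

section QuadraticRootLimit

variable {ι : Type*} {l : Filter ι} {a b c u : ι → ℝ} {a₀ b₀ c₀ : ℝ}

theorem tendsto_of_quadratic_of_lead_pos (ha : Tendsto a l (𝓝 a₀)) (hb : Tendsto b l (𝓝 b₀))
    (hc : Tendsto c l (𝓝 c₀)) (ha₀ : 0 < a₀)
    (hroot : ∀ᶠ i in l, 0 ≤ c i ∧ 0 < u i ∧ a i * u i ^ 2 + b i * u i = c i) :
    Tendsto u l (𝓝 ((√(b₀ ^ 2 + 4 * a₀ * c₀) - b₀) / (2 * a₀))) := by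
  have hlim := ((((hb.pow 2).add ((ha.const_mul 4).mul hc)).sqrt.sub hb).div
    (ha.const_mul 2) (by positivity))
  refine hlim.congr' ?_
  filter_upwards [hroot, ha.eventually_const_lt ha₀] with i ⟨hci, hui, hi⟩ hai
  exact (eq_sqrt_discrim_sub_div hai hci hui hi).symm

theorem tendsto_of_quadratic_of_add_sqrt_discrim_ne_zero (ha : Tendsto a l (𝓝 a₀))
    (hb : Tendsto b l (𝓝 b₀)) (hc : Tendsto c l (𝓝 c₀)) (h₀ : b₀ + √(b₀ ^ 2 + 4 * a₀ * c₀) ≠ 0)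
    (hroot : ∀ᶠ i in l, 0 ≤ a i ∧ 0 < c i ∧ 0 < u i ∧ a i * u i ^ 2 + b i * u i = c i) :
    Tendsto u l (𝓝 (2 * c₀ / (b₀ + √(b₀ ^ 2 + 4 * a₀ * c₀)))) := by
  have hlim := (hc.const_mul 2).div
    (hb.add ((hb.pow 2).add ((ha.const_mul 4).mul hc)).sqrt) h₀
  refine hlim.congr' ?_
  filter_upwards [hroot] with i ⟨hai, hci, hui, hi⟩
  exact (eq_div_add_sqrt_discrim hai hci hui hi).symm

end QuadraticRootLimit

theorem tendsto_const_div_pow_atTop_nhds_zero (c : ℝ) {n : ℕ} (hn : n ≠ 0) :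
    Tendsto (fun α : ℝ => c / α ^ n) atTop (𝓝 0) :=
  tendsto_const_nhds.div_atTop (tendsto_pow_atTop hn)

theorem ffun_eq_zero_iff {p ν κ α x : ℝ} (hα : α ≠ 0) (hx : 0 ≤ x) :
    ffun p ν κ α x = 0 ↔
      ν ^ 2 * x ^ 2 + ((ν ^ 2 - 4 * κ) * α ^ 2 - 4 * p) * x = 4 * p * α ^ 2 := by
  have hd : x / α ^ 2 + 1 ≠ 0 := by positivity
  rw [ffun, sub_eq_zero]
  field_simp
  constructor <;> intro h <;> linear_combination h

section Asymptotics

variable {p ν κ : ℝ} {X : ℝ → ℝ}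

theorem tendsto_ffun_zero_of_lt (hp : 0 < p) (hκ : 4 * κ < ν ^ 2)
    (hX : ∀ α > 0, 0 < X α ∧ ffun p ν κ α (X α) = 0) :
    Tendsto X atTop (𝓝 (4 * p / (ν ^ 2 - 4 * κ))) := by
  have hL : 0 < ν ^ 2 - 4 * κ := by linarith
  have hb : Tendsto (fun α : ℝ => ν ^ 2 - 4 * κ - 4 * p / α ^ 2) atTop (𝓝 (ν ^ 2 - 4 * κ)) := by
    simpa using
      tendsto_const_nhds.sub (tendsto_const_div_pow_atTop_nhds_zero (4 * p) two_ne_zero)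
  have h₀ : ν ^ 2 - 4 * κ + √((ν ^ 2 - 4 * κ) ^ 2 + 4 * 0 * (4 * p)) ≠ 0 := by
    rw [mul_zero, zero_mul, add_zero, Real.sqrt_sq hL.le]
    positivity
  have hroot : ∀ᶠ α in atTop, 0 ≤ ν ^ 2 / α ^ 2 ∧ 0 < 4 * p ∧ 0 < X α ∧
      ν ^ 2 / α ^ 2 * X α ^ 2 + (ν ^ 2 - 4 * κ - 4 * p / α ^ 2) * X α = 4 * p := by
    filter_upwards [eventually_gt_atTop 0] with α hα
    obtain ⟨hx, hf⟩ := hX α hα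
    have hq := (ffun_eq_zero_iff hα.ne' hx.le).1 hf
    refine ⟨by positivity, by positivity, hx, ?_⟩
    field_simp
    linear_combination hq
  convert tendsto_of_quadratic_of_add_sqrt_discrim_ne_zero
    (tendsto_const_div_pow_atTop_nhds_zero _ two_ne_zero) hb tendsto_const_nhds h₀ hroot using 2
  rw [mul_zero, zero_mul, add_zero, Real.sqrt_sq hL.le]
  field_simp
  ring

theorem tendsto_ffun_zero_div_of_eq (hp : 0 < p) (hν : 0 < ν) (hκ : 4 * κ = ν ^ 2)
    (hX : ∀ α > 0, 0 < X α ∧ ffun p ν κ α (X α) = 0) :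
    Tendsto (fun α => X α / α) atTop (𝓝 √(p / κ)) := by
  have hκ₀ : 0 < κ := by nlinarith
  have hb : Tendsto (fun α : ℝ => -(4 * p) / α) atTop (𝓝 0) :=
    tendsto_const_nhds.div_atTop tendsto_id
  have hD : (0:ℝ) < √(0 ^ 2 + 4 * ν ^ 2 * (4 * p)) := by
    apply Real.sqrt_pos.mpr
    positivity
  have hroot : ∀ᶠ α in atTop, 0 ≤ ν ^ 2 ∧ 0 < 4 * p ∧ 0 < X α / α ∧
      ν ^ 2 * (X α / α) ^ 2 + -(4 * p) / α * (X α / α) = 4 * p := by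
    filter_upwards [eventually_gt_atTop 0] with α hα
    obtain ⟨hx, hf⟩ := hX α hα
    have hq := (ffun_eq_zero_iff hα.ne' hx.le).1 hf
    refine ⟨by positivity, by positivity, by positivity, ?_⟩
    field_simp
    linear_combination hq + X α * α ^ 2 * hκ
  convert tendsto_of_quadratic_of_add_sqrt_discrim_ne_zero tendsto_const_nhds hb tendsto_const_nhds
    (by rw [zero_add]; exact hD.ne') hroot using 2
  rw [zero_add, eq_div_iff hD.ne', ← Real.sqrt_mul (by positivity)]
  rw [show p / κ * (0 ^ 2 + 4 * ν ^ 2 * (4 * p)) = (2 * (4 * p)) ^ 2 by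
    rw [← hκ]; field_simp; ring]
  exact Real.sqrt_sq (by positivity)

theorem tendsto_ffun_zero_div_sq_of_gt (hp : 0 < p) (hν : 0 < ν) (hκ : ν ^ 2 < 4 * κ)
    (hX : ∀ α > 0, 0 < X α ∧ ffun p ν κ α (X α) = 0) :
    Tendsto (fun α => X α / α ^ 2) atTop (𝓝 (4 * κ / ν ^ 2 - 1)) := by
  have hb : Tendsto (fun α : ℝ => ν ^ 2 - 4 * κ - 4 * p / α ^ 2) atTop (𝓝 (ν ^ 2 - 4 * κ)) := by
    simpa using
      tendsto_const_nhds.sub (tendsto_const_div_pow_atTop_nhds_zero (4 * p) two_ne_zero)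
  have hroot : ∀ᶠ α in atTop, 0 ≤ 4 * p / α ^ 2 ∧ 0 < X α / α ^ 2 ∧
      ν ^ 2 * (X α / α ^ 2) ^ 2 + (ν ^ 2 - 4 * κ - 4 * p / α ^ 2) * (X α / α ^ 2)
        = 4 * p / α ^ 2 := by
    filter_upwards [eventually_gt_atTop 0] with α hα
    obtain ⟨hx, hf⟩ := hX α hα
    have hq := (ffun_eq_zero_iff hα.ne' hx.le).1 hf
    refine ⟨by positivity, by positivity, ?_⟩
    field_simp
    linear_combination hq
  convert tendsto_of_quadratic_of_lead_pos tendsto_const_nhds hb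
    (tendsto_const_div_pow_atTop_nhds_zero _ two_ne_zero) (by positivity) hroot using 2
  rw [mul_zero, add_zero, Real.sqrt_sq_eq_abs, abs_of_neg (by linarith)]
  field_simp
  ring

end Asymptotics

/-- Asymptotics, as `α → ∞`, of the unique positive zero `x_α` of `f_α`, according to the
position of `ν²/(4κ)` with respect to `1`. -/
theorem ffun_zero_asymptotics (p ν κ : ℝ) (hp : 0 < p) (hν : 0 < ν) (hκ : 0 < κ)
    (X : ℝ → ℝ)
    (hX : ∀ α > 0, 0 < X α ∧ ffun p ν κ α (X α) = 0) :
    (1 < ν ^ 2 / (4 * κ) →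
      Tendsto X atTop (nhds (4 * p / (ν ^ 2 - 4 * κ)))) ∧
    (ν ^ 2 / (4 * κ) = 1 →
      Tendsto (fun α => X α / α) atTop (nhds (Real.sqrt (p / κ)))) ∧
    (ν ^ 2 / (4 * κ) < 1 →
      Tendsto (fun α => X α / α ^ 2) atTop (nhds (4 * κ / ν ^ 2 - 1))) := by
  have h4κ : 0 < 4 * κ := by positivity
  refine ⟨fun h => ?_, fun h => ?_, fun h => ?_⟩
  · exact tendsto_ffun_zero_of_lt hp (by rwa [one_lt_div h4κ] at h) hX
  · exact tendsto_ffun_zero_div_of_eq hp hν ((div_eq_one_iff_eq h4κ.ne').1 h).symm hX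
  · exact tendsto_ffun_zero_div_sq_of_gt hp hν (by rwa [div_lt_one h4κ] at h) hX
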